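/- For real n×n matrices A and B, the Frobenius inner product satisfies ⟨A, B⟩_F = Σᵢⱼ Aᵢⱼ Bᵢⱼ ≤ Σᵢ σᵢ(A) σᵢ(B), where σ₁(·) ≥ ... ≥ σₙ(·) are the singular values in decreasing order (Von Neumann's trace inequality). -/
import Mathlib
open Matrix Finset



lemma telesc (f : ℕ → ℝ) (m n : ℕ) (h : m ≤ n) :
    ∑ i ∈ Finset.Ico m n, (f i - f (i+1)) = f m - f n := by
  induction n with
  | zero => interval_cases m; simp
  | succ k ih =>
    rcases Nat.lt_or_ge m (k+1) with h' | h'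
    · rw [Finset.sum_Ico_succ_top (by omega), ih (by omega)]; ring
    · have : m = k + 1 := by omega
      subst this; simp

lemma ds_bound (n : ℕ) (D : Matrix (Fin n) (Fin n) ℝ)
    (hD0 : ∀ i j, 0 ≤ D i j) (hrow : ∀ i, ∑ j, D i j = 1) (hcol : ∀ j, ∑ i, D i j = 1)
    (a b : Fin n → ℝ) (ha0 : ∀ i, 0 ≤ a i) (hb0 : ∀ i, 0 ≤ b i)
    (haMono : Antitone a) (hbMono : Antitone b) :
    ∑ i, ∑ j, a i * b j * D i j ≤ ∑ i, a i * b i := by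
  classical
  set a' : ℕ → ℝ := fun k => if h : k < n then a ⟨k, h⟩ else 0 with ha'def
  set b' : ℕ → ℝ := fun k => if h : k < n then b ⟨k, h⟩ else 0 with hb'def
  have ha'anti : Antitone a' := by
    intro x y hxy
    simp only [ha'def]
    split
    · split
      · exact haMono (by exact_mod_cast hxy)
      · omega
    · split
      · exact ha0 _
      · exact le_refl 0
  have hb'anti : Antitone b' := by
    intro x y hxy
    simp only [hb'def]
    split
    · split
      · exact hbMono (by exact_mod_cast hxy)
      · omega
    · split
      · exact hb0 _
      · exact le_refl 0
  set c : ℕ → ℝ := fun k => a' k - a' (k+1) with hcdef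
  set d : ℕ → ℝ := fun k => b' k - b' (k+1) with hddef
  have hc0 : ∀ k, 0 ≤ c k := fun k => sub_nonneg.mpr (ha'anti (Nat.le_succ k))
  have hd0 : ∀ k, 0 ≤ d k := fun k => sub_nonneg.mpr (hb'anti (Nat.le_succ k))
  have hfilter : ∀ i : Fin n, (Finset.range n).filter (fun k => (i:ℕ) ≤ k) = Finset.Ico (i:ℕ) n := by
    intro i; ext x; simp; omega
  have harep : ∀ i : Fin n, a i = ∑ k ∈ Finset.range n, if (i:ℕ) ≤ k then c k else 0 := by
    intro i
    rw [← Finset.sum_filter, hfilter i, hcdef]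
    rw [telesc a' i n i.2.le]
    have h1 : a' (i:ℕ) = a i := by simp [ha'def, i.2]
    have h2 : a' n = 0 := by simp [ha'def]
    rw [h1, h2, sub_zero]
  have hbrep : ∀ i : Fin n, b i = ∑ k ∈ Finset.range n, if (i:ℕ) ≤ k then d k else 0 := by
    intro i
    rw [← Finset.sum_filter, hfilter i, hddef]
    rw [telesc b' i n i.2.le]
    have h1 : b' (i:ℕ) = b i := by simp [hb'def, i.2]
    have h2 : b' n = 0 := by simp [hb'def]
    rw [h1, h2, sub_zero]
  set x : Fin n → ℕ → ℝ := fun i k => if (i:ℕ) ≤ k then (1:ℝ) else 0 with hxdef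
  have hx01 : ∀ i k, x i k = 0 ∨ x i k = 1 := by
    intro i k; simp only [hxdef]; split
    · right; rfl
    · left; rfl
  set S : ℕ → ℕ → ℝ := fun k l => ∑ i : Fin n, ∑ j : Fin n, x i k * x j l * D i j with hSdef
  set T : ℕ → ℕ → ℝ := fun k l => ∑ i : Fin n, x i k * x i l with hTdef
  -- key rearrangement on the left
  have keyL : ∑ i, ∑ j, a i * b j * D i j
      = ∑ k ∈ Finset.range n, ∑ l ∈ Finset.range n, c k * d l * S k l := by
    have hpt : ∀ (i j : Fin n), a i * b j * D i j
        = ∑ k ∈ Finset.range n, ∑ l ∈ Finset.range n,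
            c k * d l * (x i k * x j l * D i j) := by
      intro i j
      rw [harep i, hbrep j, Finset.sum_mul_sum, Finset.sum_mul]
      refine Finset.sum_congr rfl fun k _ => ?_
      rw [Finset.sum_mul]
      refine Finset.sum_congr rfl fun l _ => ?_
      simp only [hxdef]
      split <;> split <;> ring
    simp only [hpt]
    rw [show (∑ i : Fin n, ∑ j : Fin n, ∑ k ∈ Finset.range n, ∑ l ∈ Finset.range n,
          c k * d l * (x i k * x j l * D i j))
        = ∑ i : Fin n, ∑ k ∈ Finset.range n, ∑ j : Fin n, ∑ l ∈ Finset.range n,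
          c k * d l * (x i k * x j l * D i j) from
      Finset.sum_congr rfl fun i _ => Finset.sum_comm]
    rw [show (∑ i : Fin n, ∑ k ∈ Finset.range n, ∑ j : Fin n, ∑ l ∈ Finset.range n,
          c k * d l * (x i k * x j l * D i j))
        = ∑ k ∈ Finset.range n, ∑ i : Fin n, ∑ j : Fin n, ∑ l ∈ Finset.range n,
          c k * d l * (x i k * x j l * D i j) from Finset.sum_comm]
    refine Finset.sum_congr rfl fun k _ => ?_
    rw [show (∑ i : Fin n, ∑ j : Fin n, ∑ l ∈ Finset.range n,
          c k * d l * (x i k * x j l * D i j))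
        = ∑ i : Fin n, ∑ l ∈ Finset.range n, ∑ j : Fin n,
          c k * d l * (x i k * x j l * D i j) from
      Finset.sum_congr rfl fun i _ => Finset.sum_comm]
    rw [show (∑ i : Fin n, ∑ l ∈ Finset.range n, ∑ j : Fin n,
          c k * d l * (x i k * x j l * D i j))
        = ∑ l ∈ Finset.range n, ∑ i : Fin n, ∑ j : Fin n,
          c k * d l * (x i k * x j l * D i j) from Finset.sum_comm]
    refine Finset.sum_congr rfl fun l _ => ?_
    simp only [hSdef, Finset.mul_sum]
  -- key rearrangement on the right
  have keyR : ∑ i, a i * b i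
      = ∑ k ∈ Finset.range n, ∑ l ∈ Finset.range n, c k * d l * T k l := by
    have hpt : ∀ (i : Fin n), a i * b i
        = ∑ k ∈ Finset.range n, ∑ l ∈ Finset.range n, c k * d l * (x i k * x i l) := by
      intro i
      rw [harep i, hbrep i, Finset.sum_mul_sum]
      refine Finset.sum_congr rfl fun k _ => Finset.sum_congr rfl fun l _ => ?_
      simp only [hxdef]
      split <;> split <;> ring
    simp only [hpt]
    rw [show (∑ i : Fin n, ∑ k ∈ Finset.range n, ∑ l ∈ Finset.range n,
          c k * d l * (x i k * x i l))
        = ∑ k ∈ Finset.range n, ∑ i : Fin n, ∑ l ∈ Finset.range n,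
          c k * d l * (x i k * x i l) from Finset.sum_comm]
    refine Finset.sum_congr rfl fun k _ => ?_
    rw [show (∑ i : Fin n, ∑ l ∈ Finset.range n, c k * d l * (x i k * x i l))
        = ∑ l ∈ Finset.range n, ∑ i : Fin n, c k * d l * (x i k * x i l) from
      Finset.sum_comm]
    refine Finset.sum_congr rfl fun l _ => ?_
    simp only [hTdef, Finset.mul_sum]
  -- the key inequality S k l ≤ T k l
  have hST : ∀ k l, S k l ≤ T k l := by
    intro k l
    rcases le_or_gt k l with hkl | hkl
    · have hT : T k l = ∑ i : Fin n, x i k := by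
        simp only [hTdef]
        refine Finset.sum_congr rfl fun i _ => ?_
        simp only [hxdef]
        by_cases h : (i:ℕ) ≤ k
        · rw [if_pos h, if_pos (le_trans h hkl), one_mul]
        · rw [if_neg h, zero_mul]
      rw [hT]
      simp only [hSdef]
      refine Finset.sum_le_sum fun i _ => ?_
      rcases hx01 i k with h | h
      · rw [h]
        simp
      · rw [h]
        calc ∑ j : Fin n, 1 * x j l * D i j ≤ ∑ j : Fin n, D i j := by
              refine Finset.sum_le_sum fun j _ => ?_
              rcases hx01 j l with h' | h' <;> rw [h'] <;> simp [hD0 i j]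
          _ = 1 := hrow i
    · have hT : T k l = ∑ i : Fin n, x i l := by
        simp only [hTdef]
        refine Finset.sum_congr rfl fun i _ => ?_
        simp only [hxdef]
        by_cases h : (i:ℕ) ≤ l
        · rw [if_pos h, if_pos (le_trans h hkl.le), mul_one]
        · rw [if_neg h, mul_zero]
      rw [hT]
      simp only [hSdef]
      rw [show (∑ i : Fin n, ∑ j : Fin n, x i k * x j l * D i j)
          = ∑ j : Fin n, ∑ i : Fin n, x i k * x j l * D i j from Finset.sum_comm]
      refine Finset.sum_le_sum fun j _ => ?_
      rcases hx01 j l with h | h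
      · rw [h]
        simp
      · rw [h]
        calc ∑ i : Fin n, x i k * 1 * D i j ≤ ∑ i : Fin n, D i j := by
              refine Finset.sum_le_sum fun i _ => ?_
              rcases hx01 i k with h' | h' <;> rw [h'] <;> simp [hD0 i j]
          _ = 1 := hcol j
  rw [keyL, keyR]
  refine Finset.sum_le_sum fun k _ => Finset.sum_le_sum fun l _ => ?_
  exact mul_le_mul_of_nonneg_left (hST k l) (mul_nonneg (hc0 k) (hd0 l))

lemma orth1 (n : ℕ) (U V : Matrix (Fin n) (Fin n) ℝ) (hU : Uᵀ * U = 1) (hV : Vᵀ * V = 1) :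
    (Uᵀ * V) * (Uᵀ * V)ᵀ = 1 := by
  have hV' : V * Vᵀ = 1 := mul_eq_one_comm.mp hV
  rw [Matrix.transpose_mul, Matrix.transpose_transpose, Matrix.mul_assoc,
    ← Matrix.mul_assoc V Vᵀ U, hV', Matrix.one_mul, hU]

/-- Von Neumann's trace inequality: for real `n×n` matrices `A` and `B` with
singular value decompositions `A = U₁ diag(a) V₁ᵀ` and `B = U₂ diag(b) V₂ᵀ`
(singular values nonnegative and in decreasing order), the Frobenius inner product
satisfies `⟨A, B⟩_F = Σᵢⱼ Aᵢⱼ Bᵢⱼ ≤ Σᵢ aᵢ bᵢ`. -/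
theorem stmt7 (n : ℕ) (A B U₁ V₁ U₂ V₂ : Matrix (Fin n) (Fin n) ℝ) (a b : Fin n → ℝ)
    (hU₁ : U₁ᵀ * U₁ = 1) (hV₁ : V₁ᵀ * V₁ = 1)
    (hU₂ : U₂ᵀ * U₂ = 1) (hV₂ : V₂ᵀ * V₂ = 1)
    (ha0 : ∀ i, 0 ≤ a i) (hb0 : ∀ i, 0 ≤ b i)
    (haMono : Antitone a) (hbMono : Antitone b)
    (hA : A = U₁ * Matrix.diagonal a * V₁ᵀ) (hB : B = U₂ * Matrix.diagonal b * V₂ᵀ) :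
    Matrix.trace (Aᵀ * B) = ∑ i, ∑ j, A i j * B i j ∧
    Matrix.trace (Aᵀ * B) ≤ ∑ i, a i * b i := by
  constructor
  · rw [Matrix.trace]
    rw [show (∑ i, Matrix.diag (Aᵀ * B) i) = ∑ i : Fin n, ∑ j : Fin n, A j i * B j i from
      Finset.sum_congr rfl fun i _ => by
        rw [Matrix.diag, Matrix.mul_apply]
        exact Finset.sum_congr rfl fun j _ => by rw [Matrix.transpose_apply]]
    exact Finset.sum_comm
  · -- trace formula via SVD
    have htr : Matrix.trace (Aᵀ * B)
        = ∑ i, ∑ j, a i * (U₁ᵀ * U₂) i j * b j * (V₂ᵀ * V₁) j i := by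
      have hM : Aᵀ * B = V₁ * (Matrix.diagonal a * (U₁ᵀ * (U₂ * (Matrix.diagonal b * V₂ᵀ)))) := by
        rw [hA, hB]
        simp only [Matrix.transpose_mul, Matrix.transpose_transpose, Matrix.diagonal_transpose,
          Matrix.mul_assoc]
      rw [hM, Matrix.trace_mul_comm]
      have hM2 : (Matrix.diagonal a * (U₁ᵀ * (U₂ * (Matrix.diagonal b * V₂ᵀ)))) * V₁
          = Matrix.diagonal a * (U₁ᵀ * U₂) * Matrix.diagonal b * (V₂ᵀ * V₁) := by
        simp only [Matrix.mul_assoc]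
      rw [hM2]
      set P := U₁ᵀ * U₂ with hP
      set Q := V₂ᵀ * V₁ with hQ
      rw [Matrix.trace]
      refine Finset.sum_congr rfl fun i _ => ?_
      rw [Matrix.diag, Matrix.mul_apply]
      refine Finset.sum_congr rfl fun j _ => ?_
      rw [Matrix.mul_diagonal, Matrix.diagonal_mul]
    set P := U₁ᵀ * U₂ with hP
    set Q := V₂ᵀ * V₁ with hQ
    -- orthogonality of P and Q
    have hPPt : P * Pᵀ = 1 := orth1 n U₁ U₂ hU₁ hU₂
    have hQQt : Q * Qᵀ = 1 := orth1 n V₂ V₁ hV₂ hV₁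
    have hPtP : Pᵀ * P = 1 := by
      have := orth1 n U₂ U₁ hU₂ hU₁
      rw [hP, Matrix.transpose_mul, Matrix.transpose_transpose]
      rw [Matrix.transpose_mul, Matrix.transpose_transpose] at this
      exact this
    have hQtQ : Qᵀ * Q = 1 := by
      have := orth1 n V₁ V₂ hV₁ hV₂
      rw [hQ, Matrix.transpose_mul, Matrix.transpose_transpose]
      rw [Matrix.transpose_mul, Matrix.transpose_transpose] at this
      exact this
    -- row and column sums of squares
    have hProw : ∀ i, ∑ j, P i j ^ 2 = 1 := by
      intro i
      have h := congrFun (congrFun hPPt i) i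
      rw [Matrix.mul_apply] at h
      rw [show (1 : Matrix (Fin n) (Fin n) ℝ) i i = 1 from Matrix.one_apply_eq i] at h
      rw [← h]
      exact Finset.sum_congr rfl fun j _ => by rw [Matrix.transpose_apply, sq]
    have hPcol : ∀ j, ∑ i, P i j ^ 2 = 1 := by
      intro j
      have h := congrFun (congrFun hPtP j) j
      rw [Matrix.mul_apply] at h
      rw [show (1 : Matrix (Fin n) (Fin n) ℝ) j j = 1 from Matrix.one_apply_eq j] at h
      rw [← h]
      exact Finset.sum_congr rfl fun i _ => by rw [Matrix.transpose_apply, sq]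
    have hQrow : ∀ i, ∑ j, Q i j ^ 2 = 1 := by
      intro i
      have h := congrFun (congrFun hQQt i) i
      rw [Matrix.mul_apply] at h
      rw [show (1 : Matrix (Fin n) (Fin n) ℝ) i i = 1 from Matrix.one_apply_eq i] at h
      rw [← h]
      exact Finset.sum_congr rfl fun j _ => by rw [Matrix.transpose_apply, sq]
    have hQcol : ∀ j, ∑ i, Q i j ^ 2 = 1 := by
      intro j
      have h := congrFun (congrFun hQtQ j) j
      rw [Matrix.mul_apply] at h
      rw [show (1 : Matrix (Fin n) (Fin n) ℝ) j j = 1 from Matrix.one_apply_eq j] at h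
      rw [← h]
      exact Finset.sum_congr rfl fun i _ => by rw [Matrix.transpose_apply, sq]
    -- the doubly stochastic matrix
    set D : Matrix (Fin n) (Fin n) ℝ := fun i j => (P i j ^ 2 + Q j i ^ 2) / 2 with hDdef
    have hD0 : ∀ i j, 0 ≤ D i j := by
      intro i j
      simp only [hDdef]
      positivity
    have hrow : ∀ i, ∑ j, D i j = 1 := by
      intro i
      simp only [hDdef]
      rw [show (∑ j, (P i j ^ 2 + Q j i ^ 2) / 2)
          = ((∑ j, P i j ^ 2) + ∑ j, Q j i ^ 2) / 2 by
        rw [← Finset.sum_add_distrib, ← Finset.sum_div]]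
      rw [hProw i, hQcol i]
      norm_num
    have hcol : ∀ j, ∑ i, D i j = 1 := by
      intro j
      simp only [hDdef]
      rw [show (∑ i, (P i j ^ 2 + Q j i ^ 2) / 2)
          = ((∑ i, P i j ^ 2) + ∑ i, Q j i ^ 2) / 2 by
        rw [← Finset.sum_add_distrib, ← Finset.sum_div]]
      rw [hPcol j, hQrow j]
      norm_num
    calc Matrix.trace (Aᵀ * B) = ∑ i, ∑ j, a i * P i j * b j * Q j i := htr
      _ ≤ ∑ i, ∑ j, a i * b j * D i j := by
          refine Finset.sum_le_sum fun i _ => Finset.sum_le_sum fun j _ => ?_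
          simp only [hDdef]
          have hab : 0 ≤ a i * b j := mul_nonneg (ha0 i) (hb0 j)
          nlinarith [sq_nonneg (P i j - Q j i), mul_nonneg hab (sq_nonneg (P i j - Q j i))]
      _ ≤ ∑ i, a i * b i := ds_bound n D hD0 hrow hcol a b ha0 hb0 haMono hbMono
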